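/- arXiv:2410.15070 — 5 statements merged into one kernel-verified Lean document; each statement's English description precedes it below -/
import Mathlib

section
/- Let p ≥ 2 and let i, s be positive integers with m = gcd(i, s). Then gcd(p^i + 1, p^s + 1) = p^m + 1 if both i/m and s/m are odd; otherwise gcd(p^i + 1, p^s + 1) = 1 if p is even, and gcd(p^i + 1, p^s + 1) = 2 if p is odd. -/
/-!
If `d` divides both `p ^ i + 1` and `p ^ s + 1`, then `x = p` satisfies `x ^ i = x ^ s = -1`
modulo `d`, hence `x ^ (2 * gcd i s) = 1`. Writing `i = gcd i s * (i / gcd i s)`, this forces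
`x ^ gcd i s = -1` when `i / gcd i s` is odd, and `1 = -1`, i.e. `d ∣ 2`, when it is even.
Conversely, with `m = gcd i s`, `p ^ m + 1` divides `p ^ (m * k) + 1` for every odd `k`.
-/

section NegOnePowers

variable {M : Type*} [Monoid M] [HasDistribNeg M] {x : M} {i s : ℕ}

theorem pow_two_mul_gcd_eq_one (hi : x ^ i = -1) (hs : x ^ s = -1) :
    x ^ (2 * Nat.gcd i s) = 1 := by
  have hsq : ∀ n, x ^ n = -1 → x ^ (2 * n) = 1 := fun n hn => by
    rw [mul_comm, pow_mul, hn, neg_one_sq]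
  rw [← Nat.gcd_mul_left]
  exact pow_gcd_eq_one.2 ⟨hsq i hi, hsq s hs⟩

theorem pow_gcd_eq_neg_one_of_odd (hi : x ^ i = -1) (hs : x ^ s = -1)
    (hodd : Odd (i / Nat.gcd i s)) : x ^ Nat.gcd i s = -1 := by
  obtain ⟨k, hk⟩ := hodd
  have hi' : i = 2 * Nat.gcd i s * k + Nat.gcd i s := by
    conv_lhs => rw [← Nat.mul_div_cancel' (Nat.gcd_dvd_left i s), hk]
    ring
  calc x ^ Nat.gcd i s = (x ^ (2 * Nat.gcd i s)) ^ k * x ^ Nat.gcd i s := by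
        rw [pow_two_mul_gcd_eq_one hi hs, one_pow, one_mul]
    _ = -1 := by rw [← pow_mul, ← pow_add, ← hi', hi]

theorem one_eq_neg_one_of_even_div_gcd (hi : x ^ i = -1) (hs : x ^ s = -1)
    (heven : Even (i / Nat.gcd i s)) : (1 : M) = -1 := by
  obtain ⟨k, hk⟩ := heven
  have hi' : i = 2 * Nat.gcd i s * k := by
    conv_lhs => rw [← Nat.mul_div_cancel' (Nat.gcd_dvd_left i s), hk]
    ring
  calc (1 : M) = (x ^ (2 * Nat.gcd i s)) ^ k := by rw [pow_two_mul_gcd_eq_one hi hs, one_pow]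
    _ = -1 := by rw [← pow_mul, ← hi', hi]

theorem one_eq_neg_one_of_not_odd_div_gcd (hi : x ^ i = -1) (hs : x ^ s = -1)
    (h : ¬(Odd (i / Nat.gcd i s) ∧ Odd (s / Nat.gcd i s))) : (1 : M) = -1 := by
  rw [not_and_or, Nat.not_odd_iff_even, Nat.not_odd_iff_even] at h
  rcases h with hi_even | hs_even
  · exact one_eq_neg_one_of_even_div_gcd hi hs hi_even
  · rw [Nat.gcd_comm] at hs_even
    exact one_eq_neg_one_of_even_div_gcd hs hi hs_even

end NegOnePowers

namespace Nat

theorem dvd_pow_add_one_iff {d a n : ℕ} : d ∣ a ^ n + 1 ↔ (a : ZMod d) ^ n = -1 := by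
  rw [← ZMod.natCast_eq_zero_iff, eq_neg_iff_add_eq_zero]
  push_cast
  rfl

theorem gcd_pow_add_one_pow_add_one_of_odd (a : ℕ) {i s : ℕ} (hi : Odd (i / Nat.gcd i s))
    (hs : Odd (s / Nat.gcd i s)) :
    Nat.gcd (a ^ i + 1) (a ^ s + 1) = a ^ Nat.gcd i s + 1 := by
  set d := Nat.gcd (a ^ i + 1) (a ^ s + 1)
  have hd_dvd : d ∣ a ^ Nat.gcd i s + 1 :=
    dvd_pow_add_one_iff.2 <| pow_gcd_eq_neg_one_of_odd
      (dvd_pow_add_one_iff.1 (Nat.gcd_dvd_left _ _))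
      (dvd_pow_add_one_iff.1 (Nat.gcd_dvd_right _ _)) hi
  have hdvd_pow : ∀ {n}, Odd (n / Nat.gcd i s) → Nat.gcd i s ∣ n →
      a ^ Nat.gcd i s + 1 ∣ a ^ n + 1 := fun hn hgn => by
    simpa only [one_pow, ← pow_mul, Nat.mul_div_cancel' hgn]
      using hn.nat_add_dvd_pow_add_pow (a ^ Nat.gcd i s) 1
  exact Nat.dvd_antisymm hd_dvd
    (Nat.dvd_gcd (hdvd_pow hi (Nat.gcd_dvd_left i s)) (hdvd_pow hs (Nat.gcd_dvd_right i s)))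

theorem gcd_pow_add_one_pow_add_one_dvd_two (a : ℕ) {i s : ℕ}
    (h : ¬(Odd (i / Nat.gcd i s) ∧ Odd (s / Nat.gcd i s))) :
    Nat.gcd (a ^ i + 1) (a ^ s + 1) ∣ 2 := by
  have hone := one_eq_neg_one_of_not_odd_div_gcd
    (dvd_pow_add_one_iff.1 (Nat.gcd_dvd_left (a ^ i + 1) (a ^ s + 1)))
    (dvd_pow_add_one_iff.1 (Nat.gcd_dvd_right (a ^ i + 1) (a ^ s + 1))) h
  rw [← ZMod.natCast_eq_zero_iff]
  push_cast
  linear_combination hone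

end Nat

theorem stmt0_general (p i s m : ℕ) (hi : 0 < i)
    (hm : m = Nat.gcd i s) :
    ((Odd (i / m) ∧ Odd (s / m)) → Nat.gcd (p ^ i + 1) (p ^ s + 1) = p ^ m + 1) ∧
    (¬(Odd (i / m) ∧ Odd (s / m)) →
      ((Even p → Nat.gcd (p ^ i + 1) (p ^ s + 1) = 1) ∧
       (Odd p → Nat.gcd (p ^ i + 1) (p ^ s + 1) = 2))) := by
  subst hm
  refine ⟨fun ⟨hi_odd, hs_odd⟩ => Nat.gcd_pow_add_one_pow_add_one_of_odd p hi_odd hs_odd,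
    fun h => ⟨fun hp => ?_, fun hp => ?_⟩⟩
  all_goals have hdvd_two := Nat.gcd_pow_add_one_pow_add_one_dvd_two p h
  · have hodd : Odd (p ^ i + 1) := (hp.pow_of_ne_zero hi.ne').add_one
    exact Nat.eq_one_of_dvd_coprimes (Nat.coprime_two_right.2 hodd)
      (Nat.gcd_dvd_left _ _) hdvd_two
  · exact Nat.dvd_antisymm hdvd_two
      (Nat.dvd_gcd hp.pow.add_one.two_dvd hp.pow.add_one.two_dvd)

theorem stmt0 (p i s m : ℕ) (hp : 2 ≤ p) (hi : 0 < i) (hs : 0 < s)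
    (hm : m = Nat.gcd i s) :
    ((Odd (i / m) ∧ Odd (s / m)) → Nat.gcd (p ^ i + 1) (p ^ s + 1) = p ^ m + 1) ∧
    (¬(Odd (i / m) ∧ Odd (s / m)) →
      ((Even p → Nat.gcd (p ^ i + 1) (p ^ s + 1) = 1) ∧
       (Odd p → Nat.gcd (p ^ i + 1) (p ^ s + 1) = 2))) :=
  stmt0_general p i s m hi hm
end

section
/- Let p be a prime, s > 1 an integer, q = p^s, and let i be an integer with 0 < i < s and m = gcd(i, s). For every pair (a, b) ∈ F_{q^2} × F_{q^2} with (a, b) ≠ (0, 0), the number of u ∈ U_{q+1} satisfying a + b·u + b^q·u^{p^i} + a^q·u^{p^i + 1} = 0 belongs to the set {0, 1, 2, p^m + 1}. -/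
/-!
Write `σ u = u ^ p ^ i`. The equation says `F (u, σ u) = 0` for the bilinear polynomial
`F (x, y) = a + b x + b^q y + a^q x y`. If `a^{q+1} = b^{q+1}`, then `F` is a product of a linear
polynomial in `x` and one in `y`, and there are at most two solutions. Otherwise `F (x, y) = 0` is
the graph of a Möbius transformation, so it preserves cross ratios. Given three solutions
`u₁, u₂, u₃`, another `u ∈ U_{q+1}` is then a solution exactly when its cross ratio `t` with them
satisfies `σ t = t`. On `U_{q+1}` we have `u ^ q = u⁻¹`, and inversion preserves cross ratios, so
the cross ratio maps `U_{q+1} \ {u₁}` into `F_q`, injectively, and so bijectively since both sets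
have `q` elements. The `t ∈ F_q` with `σ t = t` form `F_{p^m}`, which gives `p ^ m + 1` solutions.
-/

open Function

section RootCount

variable {K : Type*} [Field K] [Fintype K]

theorem ncard_pow_eq_one_of_dvd {n : ℕ} (hn : n ∣ Fintype.card K - 1) :
    {x : K | x ^ n = 1}.ncard = n := by
  have hn0 : n ≠ 0 := (Nat.pos_of_dvd_of_pos hn (Nat.sub_pos_of_lt Fintype.one_lt_card)).ne'
  have hunits :
      {x : K | x ^ n = 1} = Units.val '' ((powMonoidHom n : Kˣ →* Kˣ).ker : Set Kˣ) := by
    ext x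
    constructor
    · intro hx
      exact ⟨(IsUnit.of_pow_eq_one hx hn0).unit, by simpa [Units.ext_iff] using hx, rfl⟩
    · rintro ⟨u, hu, rfl⟩
      simpa [Units.ext_iff] using hu
  rw [hunits, Set.InjOn.ncard_image Units.val_injective.injOn, ← Nat.card_coe_set_eq,
    SetLike.coe_sort_coe, IsCyclic.card_powMonoidHom_ker, Nat.card_units,
    Nat.card_eq_fintype_card, Nat.gcd_eq_right hn]

theorem ncard_pow_succ_eq_self_of_dvd {n : ℕ} (hn : n ∣ Fintype.card K - 1) :
    {x : K | x ^ (n + 1) = x}.ncard = n + 1 := by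
  have h : {x : K | x ^ (n + 1) = x} = insert 0 {x : K | x ^ n = 1} := by
    ext x
    simp [pow_succ, mul_left_eq_self₀, or_comm]
  rw [h, Set.ncard_insert_of_notMem, ncard_pow_eq_one_of_dvd hn]
  simpa [zero_pow_eq_one₀] using
    (Nat.pos_of_dvd_of_pos hn (Nat.sub_pos_of_lt Fintype.one_lt_card)).ne'

theorem ncard_pow_prime_pow_eq_self {p n j : ℕ} (hp : p.Prime) (hK : Fintype.card K = p ^ n)
    (hj : j ∣ n) : {x : K | x ^ p ^ j = x}.ncard = p ^ j := by
  have hpj : p ^ j - 1 + 1 = p ^ j := Nat.sub_add_cancel (Nat.one_le_pow _ _ hp.pos)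
  rw [← hpj]
  exact ncard_pow_succ_eq_self_of_dvd (hK ▸ Nat.pow_sub_one_dvd_pow_sub_one p hj)

end RootCount

section CrossRatio

variable {K : Type*} [Field K]

/-- The Möbius transformation sending `z₂, z₃, z₁` to `0, 1, ∞`, evaluated at `z`. -/
def crossRatio (z₁ z₂ z₃ z : K) : K := (z - z₂) * (z₁ - z₃) / ((z₁ - z) * (z₃ - z₂))

theorem map_crossRatio {L : Type*} [Field L] (f : K →+* L) (z₁ z₂ z₃ z : K) :
    f (crossRatio z₁ z₂ z₃ z) = crossRatio (f z₁) (f z₂) (f z₃) (f z) := by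
  simp [crossRatio, map_div₀]

theorem crossRatio_inv {z₁ z₂ z₃ z : K} (h₁ : z₁ ≠ 0) (h₂ : z₂ ≠ 0) (h₃ : z₃ ≠ 0) (h : z ≠ 0) :
    crossRatio z₁⁻¹ z₂⁻¹ z₃⁻¹ z⁻¹ = crossRatio z₁ z₂ z₃ z := by
  simp only [crossRatio, inv_sub_inv h₁ h₃, inv_sub_inv h h₂, inv_sub_inv h₁ h, inv_sub_inv h₃ h₂]
  field_simp
  ring

theorem crossRatio_injOn {z₁ z₂ z₃ : K} (h₁₂ : z₁ ≠ z₂) (h₁₃ : z₁ ≠ z₃) (h₂₃ : z₂ ≠ z₃) :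
    Set.InjOn (crossRatio z₁ z₂ z₃) {z | z ≠ z₁} := by
  intro z hz w hw hzw
  have hz₁ : z₁ - z ≠ 0 := sub_ne_zero.2 (Ne.symm hz)
  have hw₁ : z₁ - w ≠ 0 := sub_ne_zero.2 (Ne.symm hw)
  have h₃₂ : z₃ - z₂ ≠ 0 := sub_ne_zero.2 h₂₃.symm
  rw [crossRatio, crossRatio, div_eq_div_iff (mul_ne_zero hz₁ h₃₂) (mul_ne_zero hw₁ h₃₂)] at hzw
  have h : (z - w) * ((z₁ - z₂) * (z₁ - z₃) * (z₃ - z₂)) = 0 := by linear_combination hzw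
  simpa [sub_eq_zero, h₁₂, h₁₃, h₂₃.symm] using h

end CrossRatio

section Bilinear

variable {K : Type*} [Field K] {α β γ δ : K}

theorem bilinear_eq_zero_iff_crossRatio_eq (hΔ : α * δ ≠ β * γ) {x₁ x₂ x₃ y₁ y₂ y₃ x y : K}
    (h₁ : α + β * x₁ + γ * y₁ + δ * x₁ * y₁ = 0) (h₂ : α + β * x₂ + γ * y₂ + δ * x₂ * y₂ = 0)
    (h₃ : α + β * x₃ + γ * y₃ + δ * x₃ * y₃ = 0) (hx₁₂ : x₁ ≠ x₂) (hx₂₃ : x₂ ≠ x₃)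
    (hy₁₃ : y₁ ≠ y₃) (hy₂₃ : y₂ ≠ y₃) (hx : x ≠ x₁) (hy : y ≠ y₁) :
    α + β * x + γ * y + δ * x * y = 0 ↔ crossRatio x₁ x₂ x₃ x = crossRatio y₁ y₂ y₃ y := by
  have hL₃ : β + δ * y₃ ≠ 0 := fun h ↦ hΔ (by linear_combination δ * h₃ - (γ + δ * x₃) * h)
  -- Both sides are bilinear in `(x, y)` and vanish at the three given points.
  have key : (β + δ * y₃) * ((x - x₂) * (x₁ - x₃) * ((y₁ - y) * (y₃ - y₂)) -
      (y - y₂) * (y₁ - y₃) * ((x₁ - x) * (x₃ - x₂))) =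
      (x₁ - x₂) * (y₁ - y₃) * (y₃ - y₂) * (α + β * x + γ * y + δ * x * y) := by
    linear_combination
      ((y₁ - y₃) * (y₃ - y₂) * (x₂ - x) + (x - x₂) * (y₁ - y) * (y₃ - y₂)) * h₁ +
      ((y₁ - y₃) * (y₃ - y₂) * (x - x₁) + (y - y₂) * (y₁ - y₃) * (x₁ - x)) * h₂ -
      ((x - x₂) * (y₁ - y) * (y₃ - y₂) + (y - y₂) * (y₁ - y₃) * (x₁ - x)) * h₃
  have hc : (x₁ - x₂) * (y₁ - y₃) * (y₃ - y₂) ≠ 0 := by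
    simp [sub_eq_zero, hx₁₂, hy₁₃, hy₂₃.symm]
  rw [crossRatio, crossRatio, div_eq_div_iff
      (mul_ne_zero (sub_ne_zero.2 hx.symm) (sub_ne_zero.2 hx₂₃.symm))
      (mul_ne_zero (sub_ne_zero.2 hy.symm) (sub_ne_zero.2 hy₂₃.symm)),
    ← sub_eq_zero (a := (x - x₂) * _ * _), ← mul_eq_zero_iff_left hL₃ (b := _ - _), key,
    mul_eq_zero_iff_left hc]

theorem ncard_setOf_bilinear_le_two {σ : K → K} (hσ : Injective σ) (hβ : β ≠ 0)
    (hdeg : α * δ = β * γ) : {x | α + β * x + γ * σ x + δ * x * σ x = 0}.ncard ≤ 2 := by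
  have hA : {x | α + β * x = 0}.Subsingleton := by
    intro x (hx : α + β * x = 0) y (hy : α + β * y = 0)
    exact mul_left_cancel₀ hβ (by linear_combination hx - hy)
  have hB : {x | β + δ * σ x = 0}.Subsingleton := by
    intro x (hx : β + δ * σ x = 0) y (hy : β + δ * σ y = 0)
    have hδ : δ ≠ 0 := by
      rintro rfl
      exact hβ (by simpa using hx)
    exact hσ (mul_left_cancel₀ hδ (by linear_combination hx - hy))
  have hsub : {x | α + β * x + γ * σ x + δ * x * σ x = 0} ⊆
      {x | α + β * x = 0} ∪ {x | β + δ * σ x = 0} := by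
    intro x (hx : α + β * x + γ * σ x + δ * x * σ x = 0)
    have h : (α + β * x) * (β + δ * σ x) = 0 := by
      linear_combination β * hx + σ x * hdeg
    exact mul_eq_zero.1 h
  calc _ ≤ ({x | α + β * x = 0} ∪ {x | β + δ * σ x = 0}).ncard :=
        Set.ncard_le_ncard hsub (hA.finite.union hB.finite)
    _ ≤ _ := Set.ncard_union_le _ _
    _ ≤ 1 + 1 :=
      add_le_add ((Set.ncard_le_one hA.finite).2 hA) ((Set.ncard_le_one hB.finite).2 hB)

end Bilinear

theorem isPeriodicPt_frobenius_iff {K : Type*} [CommSemiring K] {p : ℕ} [ExpChar K p] {n : ℕ}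
    {x : K} : IsPeriodicPt (frobenius K p) n x ↔ x ^ p ^ n = x := by
  rw [IsPeriodicPt, IsFixedPt, iterate_frobenius]

theorem pow_eq_inv_of_pow_succ_eq_one {M : Type*} [DivisionMonoid M] {u : M} {n : ℕ}
    (hu : u ^ (n + 1) = 1) : u ^ n = u⁻¹ :=
  eq_inv_of_mul_eq_one_left (by rwa [← pow_succ])

def unitCircleSolutions {K : Type*} [Field K] (p s i : ℕ) (α β γ δ : K) : Set K :=
  {u | u ^ (p ^ s + 1) = 1 ∧ α + β * u + γ * u ^ p ^ i + δ * u ^ (p ^ i + 1) = 0}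

section UnitCircle

variable {K : Type*} [Field K] [Fintype K] {p : ℕ} [Fact p.Prime] [CharP K p] {s : ℕ}

theorem crossRatio_bijOn_unitCircle (hK : Fintype.card K = (p ^ s) ^ 2) {u₁ u₂ u₃ : K}
    (hu₁ : u₁ ^ (p ^ s + 1) = 1) (hu₂ : u₂ ^ (p ^ s + 1) = 1) (hu₃ : u₃ ^ (p ^ s + 1) = 1)
    (h₁₂ : u₁ ≠ u₂) (h₁₃ : u₁ ≠ u₃) (h₂₃ : u₂ ≠ u₃) :
    Set.BijOn (crossRatio u₁ u₂ u₃) ({u | u ^ (p ^ s + 1) = 1} \ {u₁}) {t | t ^ p ^ s = t} := by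
  have hne {u : K} (hu : u ^ (p ^ s + 1) = 1) : u ≠ 0 := by
    rintro rfl
    simp at hu
  have hmaps : Set.MapsTo (crossRatio u₁ u₂ u₃) ({u | u ^ (p ^ s + 1) = 1} \ {u₁})
      {t | t ^ p ^ s = t} := by
    rintro u ⟨hu, -⟩
    change _ = _
    rw [← iterateFrobenius_def, map_crossRatio]
    simp only [iterateFrobenius_def, pow_eq_inv_of_pow_succ_eq_one hu₁,
      pow_eq_inv_of_pow_succ_eq_one hu₂, pow_eq_inv_of_pow_succ_eq_one hu₃,
      pow_eq_inv_of_pow_succ_eq_one hu]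
    exact crossRatio_inv (hne hu₁) (hne hu₂) (hne hu₃) (hne hu)
  have hinj : Set.InjOn (crossRatio u₁ u₂ u₃) ({u | u ^ (p ^ s + 1) = 1} \ {u₁}) :=
    (crossRatio_injOn h₁₂ h₁₃ h₂₃).mono fun u hu ↦ hu.2
  have hcard : ({u : K | u ^ (p ^ s + 1) = 1} \ {u₁}).ncard = {t : K | t ^ p ^ s = t}.ncard := by
    rw [Set.ncard_sdiff_singleton_of_mem (s := {u : K | u ^ (p ^ s + 1) = 1}) hu₁,
      ncard_pow_eq_one_of_dvd, ncard_pow_prime_pow_eq_self (Fact.out : p.Prime)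
        (hK.trans (pow_mul p s 2).symm) (dvd_mul_right s 2), Nat.add_sub_cancel]
    exact hK ▸ Dvd.intro _ (by simpa using (Nat.sq_sub_sq (p ^ s) 1).symm)
  refine ⟨hmaps, hinj, ?_⟩
  rw [Set.SurjOn, ← Set.eq_of_subset_of_ncard_le hmaps.image_subset
    (by rw [hinj.ncard_image, hcard])]

theorem ncard_unitCircleSolutions_le_two (i : ℕ) {α β γ δ : K} (hβ : β ≠ 0)
    (hdeg : α * δ = β * γ) : (unitCircleSolutions p s i α β γ δ).ncard ≤ 2 := by
  refine le_trans (Set.ncard_le_ncard ?_)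
    (ncard_setOf_bilinear_le_two (iterateFrobenius K p i).injective hβ hdeg)
  rintro u ⟨-, hu⟩
  rw [Set.mem_ofPred, iterateFrobenius_def]
  linear_combination hu

theorem ncard_unitCircleSolutions_eq (hK : Fintype.card K = (p ^ s) ^ 2) (i : ℕ) {α β γ δ : K}
    (hΔ : α * δ ≠ β * γ) {u₁ u₂ u₃ : K} (h₁₂ : u₁ ≠ u₂) (h₁₃ : u₁ ≠ u₃) (h₂₃ : u₂ ≠ u₃)
    (hu₁ : u₁ ∈ unitCircleSolutions p s i α β γ δ) (hu₂ : u₂ ∈ unitCircleSolutions p s i α β γ δ)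
    (hu₃ : u₃ ∈ unitCircleSolutions p s i α β γ δ) :
    (unitCircleSolutions p s i α β γ δ).ncard = p ^ Nat.gcd i s + 1 := by
  set σ := iterateFrobenius K p i
  have hbij := crossRatio_bijOn_unitCircle hK hu₁.1 hu₂.1 hu₃.1 h₁₂ h₁₃ h₂₃
  have hfix : {t : K | t ^ p ^ Nat.gcd i s = t} = {t | t ^ p ^ i = t ∧ t ^ p ^ s = t} := by
    ext t
    simp only [Set.mem_ofPred, ← isPeriodicPt_frobenius_iff (p := p)]
    exact ⟨fun h ↦ ⟨h.trans_dvd (Nat.gcd_dvd_left i s), h.trans_dvd (Nat.gcd_dvd_right i s)⟩,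
      fun h ↦ h.1.gcd h.2⟩
  have hform (u : K) : α + β * u + γ * u ^ p ^ i + δ * u ^ (p ^ i + 1) =
      α + β * u + γ * σ u + δ * u * σ u := by
    rw [iterateFrobenius_def]
    ring
  have key : ∀ u ∈ {u : K | u ^ (p ^ s + 1) = 1} \ {u₁},
      (α + β * u + γ * u ^ p ^ i + δ * u ^ (p ^ i + 1) = 0 ↔
        crossRatio u₁ u₂ u₃ u ∈ {t | t ^ p ^ Nat.gcd i s = t}) := by
    intro u hu
    have hne : u ≠ u₁ := hu.2
    rw [hform, bilinear_eq_zero_iff_crossRatio_eq hΔ (hform u₁ ▸ hu₁.2) (hform u₂ ▸ hu₂.2)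
      (hform u₃ ▸ hu₃.2) h₁₂ h₂₃ (σ.injective.ne h₁₃) (σ.injective.ne h₂₃) hne
      (σ.injective.ne hne), ← map_crossRatio, hfix]
    exact ⟨fun h ↦ ⟨h.symm, hbij.mapsTo hu⟩, fun h ↦ h.1.symm⟩
  have hS : unitCircleSolutions p s i α β γ δ \ {u₁} =
      ({u | u ^ (p ^ s + 1) = 1} \ {u₁}) ∩
        crossRatio u₁ u₂ u₃ ⁻¹' {t | t ^ p ^ Nat.gcd i s = t} := by
    ext u
    constructor
    · rintro ⟨⟨hC, hE⟩, hne⟩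
      exact ⟨⟨hC, hne⟩, (key u ⟨hC, hne⟩).1 hE⟩
    · rintro ⟨hu, hT⟩
      exact ⟨⟨hu.1, (key u hu).2 hT⟩, hu.2⟩
  rw [← Set.ncard_sdiff_singleton_add_one hu₁, hS,
    (hbij.subset_right (hfix ▸ fun t ht ↦ ht.2)).ncard_eq,
    ncard_pow_prime_pow_eq_self (Fact.out : p.Prime) (hK.trans (pow_mul p s 2).symm)
      ((Nat.gcd_dvd_right i s).mul_right 2)]

end UnitCircle

theorem stmt1_general (p s : ℕ) (hp : p.Prime) (q : ℕ) (hq : q = p ^ s)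
    (i m : ℕ) (hm : m = Nat.gcd i s)
    (K : Type) [Field K] [Fintype K] (hK : Fintype.card K = q ^ 2)
    (a b : K) (hab : (a, b) ≠ (0, 0)) :
    ({u : K | u ^ (q + 1) = 1 ∧
        a + b * u + b ^ q * u ^ (p ^ i) + a ^ q * u ^ (p ^ i + 1) = 0}).ncard
      ∈ ({0, 1, 2, p ^ m + 1} : Set ℕ) := by
  subst hq hm
  have : Fact p.Prime := ⟨hp⟩
  have : CharP K p := charP_of_card_eq_prime_pow (hK.trans (pow_mul p s 2).symm)
  change (unitCircleSolutions p s i a b (b ^ p ^ s) (a ^ p ^ s)).ncard ∈ _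
  by_cases h : 2 < (unitCircleSolutions p s i a b (b ^ p ^ s) (a ^ p ^ s)).ncard
  · obtain ⟨u₁, hu₁, u₂, hu₂, u₃, hu₃, h₁₂, h₁₃, h₂₃⟩ := (Set.two_lt_ncard).1 h
    have hΔ : a * a ^ p ^ s ≠ b * b ^ p ^ s := by
      intro hdeg
      have hb : b ≠ 0 := by
        rintro rfl
        simp_all
      exact h.not_ge (ncard_unitCircleSolutions_le_two i hb hdeg)
    simp [ncard_unitCircleSolutions_eq hK i hΔ h₁₂ h₁₃ h₂₃ hu₁ hu₂ hu₃]
  · interval_cases (unitCircleSolutions p s i a b (b ^ p ^ s) (a ^ p ^ s)).ncard <;> simp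

theorem stmt1 (p s : ℕ) (hp : p.Prime) (hs : 1 < s) (q : ℕ) (hq : q = p ^ s)
    (i m : ℕ) (hi0 : 0 < i) (his : i < s) (hm : m = Nat.gcd i s)
    (K : Type) [Field K] [Fintype K] (hK : Fintype.card K = q ^ 2)
    (a b : K) (hab : (a, b) ≠ (0, 0)) :
    ({u : K | u ^ (q + 1) = 1 ∧
        a + b * u + b ^ q * u ^ (p ^ i) + a ^ q * u ^ (p ^ i + 1) = 0}).ncard
      ∈ ({0, 1, 2, p ^ m + 1} : Set ℕ) :=
  stmt1_general p s hp q hq i m hm K hK a b hab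
end

section
/- Let p be an odd prime, s > 1 an integer, q = p^s, and let i be an integer with 0 < i < s and m = gcd(i, s). For every pair (a, b) ∈ F_{q^2} × F_{q^2} with (a, b) ≠ (0, 0), the number of u ∈ U_{q+1} satisfying b^q + a^q·u + a·u^{p^i} + b·u^{p^i + 1} = 0 belongs to the set {0, 1, 2, p^m + 1}. -/
/-!
Work on the projective line over `K`, with `σ x = x ^ p ^ i` and `τ x = x ^ q` acting on
coordinates. The points of the circle `u ^ (q + 1) = 1` are the `[u : 1]` at which `τ` agrees
projectively with the swap `[x : y] ↦ [y : x]` (`[1 : 0]` is not such a point), and the roots of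
the equation are the `[u : 1]` at which `σ` agrees projectively with the Möbius map
`[x : y] ↦ [-(a ^ q x + b ^ q y) : b x + a y]`. When this map is singular, i.e.
`a ^ (q + 1) = b ^ (q + 1)`, the equation factors as `(b u + a) (b u ^ p ^ i + a ^ q) = 0` and
has at most two roots.

A `σ`-semilinear `f` that is proportional to an injective linear `L` at `∞, 0, 1` equals
`c • L ∘ σ`, so it agrees with `L` exactly at the `σ`-rational points. Hence if the two loci share
three points, pulling both back along the linear map that sends `∞, 0, 1` to them turns their
intersection into `ℙ¹(Fix σ ∩ Fix τ)`, the projective line over `𝔽_{p ^ m}`, with `p ^ m + 1`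
points.
-/

open Function Projectivization
open scoped LinearAlgebra.Projectivization

section Semilinear

variable {K W : Type*} [Field K] [AddCommGroup W] [Module K W]

def RingHom.prodSemilinearMap (σ : K →+* K) : K × K →ₛₗ[σ] K × K where
  toFun v := (σ v.1, σ v.2)
  map_add' _ _ := by simp
  map_smul' _ _ := by simp

@[simp]
theorem RingHom.prodSemilinearMap_apply (σ : K →+* K) (v : K × K) :
    σ.prodSemilinearMap v = (σ v.1, σ v.2) :=
  rfl

theorem RingHom.prodSemilinearMap_injective (σ : K →+* K) : Injective σ.prodSemilinearMap :=
  Prod.map_injective.mpr ⟨σ.injective, σ.injective⟩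

theorem LinearMap.apply_pair_eq_smul_add_smul {σ : K →+* K} (f : K × K →ₛₗ[σ] W) (x y : K) :
    f (x, y) = σ x • f (1, 0) + σ y • f (0, 1) := by
  rw [← map_smulₛₗ, ← map_smulₛₗ, ← map_add]
  simp

theorem LinearMap.eq_smul_comp_prodSemilinearMap {σ : K →+* K} {f : K × K →ₛₗ[σ] W}
    {L : K × K →ₗ[K] W} (hL : Injective L) {a₁ a₂ a : K} (h₁ : f (1, 0) = a₁ • L (1, 0))
    (h₂ : f (0, 1) = a₂ • L (0, 1)) (h : f (1, 1) = a • L (1, 1)) (v : K × K) :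
    f v = a • L (σ.prodSemilinearMap v) := by
  have hL₁ := L.apply_pair_eq_smul_add_smul 1 1
  have hf₁ := f.apply_pair_eq_smul_add_smul 1 1
  simp only [map_one, one_smul] at hL₁ hf₁
  obtain ⟨rfl, rfl⟩ : a₁ = a ∧ a₂ = a := by
    have : L (a₁ - a, a₂ - a) = 0 := by
      rw [L.apply_pair_eq_smul_add_smul]
      simp only [RingHom.id_apply]
      linear_combination (norm := module) h - h₁ - h₂ - hf₁ + a • hL₁
    simpa [sub_eq_zero] using hL (this.trans L.map_zero.symm)
  rw [f.apply_pair_eq_smul_add_smul, L.apply_pair_eq_smul_add_smul, h₁, h₂]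
  simp [smul_smul, mul_comm]

end Semilinear

namespace Projectivization

variable {K W : Type*} [Field K] [AddCommGroup W] [Module K W]

def infinityPt : ℙ K (K × K) := mk K (1, 0) (by simp)

def affinePt (c : K) : ℙ K (K × K) := mk K (c, 1) (by simp)

theorem mk_eq_mk_iff_mul_eq_mul {v w : K × K} (hv : v ≠ 0) (hw : w ≠ 0) :
    mk K v hv = mk K w hw ↔ v.1 * w.2 = w.1 * v.2 := by
  obtain ⟨x, y⟩ := v
  obtain ⟨x', y'⟩ := w
  rw [mk_eq_mk_iff']
  constructor
  · rintro ⟨a, ha⟩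
    simp only [Prod.smul_mk, smul_eq_mul, Prod.mk.injEq] at ha
    rw [← ha.1, ← ha.2]
    ring
  · intro hxy
    by_cases hy' : y' = 0
    · have hx' : x' ≠ 0 := by rintro rfl; exact hw (by simp [hy'])
      have hy : y = 0 := by simpa [hy', hx'] using hxy.symm
      exact ⟨x / x', by simp [hy, hy', hx']⟩
    · refine ⟨y / y', ?_⟩
      simp only [Prod.smul_mk, smul_eq_mul, Prod.mk.injEq]
      constructor <;> field_simp
      linear_combination -hxy

theorem affinePt_injective : Injective (affinePt : K → ℙ K (K × K)) := fun c d h => by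
  simpa [affinePt, mk_eq_mk_iff_mul_eq_mul] using h

theorem affinePt_ne_infinityPt (c : K) : affinePt c ≠ infinityPt := by
  simp [affinePt, infinityPt, mk_eq_mk_iff_mul_eq_mul]

theorem eq_infinityPt_or_exists_eq_affinePt (x : ℙ K (K × K)) :
    x = infinityPt ∨ ∃ c, x = affinePt c := by
  induction x using ind with | h v _ =>
  obtain ⟨x, y⟩ := v
  by_cases hy : y = 0
  · subst hy
    simp [infinityPt, mk_eq_mk_iff_mul_eq_mul]
  · exact Or.inr ⟨x / y, by simp [affinePt, mk_eq_mk_iff_mul_eq_mul, hy]⟩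

theorem map_prodSemilinearMap_infinityPt (σ : K →+* K) :
    map σ.prodSemilinearMap σ.prodSemilinearMap_injective infinityPt = infinityPt := by
  simp [infinityPt, map_mk]

theorem map_prodSemilinearMap_affinePt (σ : K →+* K) (c : K) :
    map σ.prodSemilinearMap σ.prodSemilinearMap_injective (affinePt c) = affinePt (σ c) := by
  simp [affinePt, map_mk]

def mobius (A B C D : K) : K × K →ₗ[K] K × K :=
  (A • LinearMap.fst K K K + B • LinearMap.snd K K K).prod
    (C • LinearMap.fst K K K + D • LinearMap.snd K K K)

@[simp]
theorem mobius_apply (A B C D : K) (v : K × K) :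
    mobius A B C D v = (A * v.1 + B * v.2, C * v.1 + D * v.2) :=
  rfl

theorem mobius_injective {A B C D : K} (h : A * D - B * C ≠ 0) : Injective (mobius A B C D) := by
  refine (injective_iff_map_eq_zero _).mpr fun ⟨x, y⟩ hxy => ?_
  simp only [mobius_apply, Prod.mk_eq_zero] at hxy
  have hx : (A * D - B * C) * x = 0 := by linear_combination D * hxy.1 - B * hxy.2
  have hy : (A * D - B * C) * y = 0 := by linear_combination A * hxy.2 - C * hxy.1
  simp_all

def eqLocus {σ τ : K →+* K} (f : K × K →ₛₗ[σ] W) (hf : Injective f)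
    (g : K × K →ₛₗ[τ] W) (hg : Injective g) : Set (ℙ K (K × K)) :=
  {x | map f hf x = map g hg x}

section eqLocus

variable {σ τ : K →+* K}

theorem mk_mem_eqLocus_iff {f : K × K →ₛₗ[σ] W} {hf : Injective f} {g : K × K →ₛₗ[τ] W}
    {hg : Injective g} {v : K × K} (hv : v ≠ 0) :
    mk K v hv ∈ eqLocus f hf g hg ↔ ∃ a : K, a • g v = f v :=
  mk_eq_mk_iff' K _ _ _ _

theorem affinePt_mem_eqLocus_iff {f : K × K →ₛₗ[σ] K × K} {hf : Injective f}
    {g : K × K →ₛₗ[τ] K × K} {hg : Injective g} {c : K} :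
    affinePt c ∈ eqLocus f hf g hg ↔ (f (c, 1)).1 * (g (c, 1)).2 = (g (c, 1)).1 * (f (c, 1)).2 :=
  mk_eq_mk_iff_mul_eq_mul _ _

theorem infinityPt_mem_eqLocus_iff {f : K × K →ₛₗ[σ] K × K} {hf : Injective f}
    {g : K × K →ₛₗ[τ] K × K} {hg : Injective g} :
    infinityPt ∈ eqLocus f hf g hg ↔ (f (1, 0)).1 * (g (1, 0)).2 = (g (1, 0)).1 * (f (1, 0)).2 :=
  mk_eq_mk_iff_mul_eq_mul _ _

theorem preimage_eqLocus (f : K × K →ₛₗ[σ] W) (hf : Injective f) (g : K × K →ₛₗ[τ] W)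
    (hg : Injective g) (ψ : K × K →ₗ[K] K × K) (hψ : Injective ψ) :
    map ψ hψ ⁻¹' eqLocus f hf g hg = eqLocus (f.comp ψ) (hf.comp hψ) (g.comp ψ) (hg.comp hψ) := by
  ext x
  induction x using ind
  rfl

theorem eqLocus_eq_of_frame {f : K × K →ₛₗ[σ] W} (hf : Injective f) {L : K × K →ₗ[K] W}
    (hL : Injective L) (hframe : {infinityPt, affinePt 0, affinePt 1} ⊆ eqLocus f hf L hL) :
    eqLocus f hf L hL =
      eqLocus σ.prodSemilinearMap σ.prodSemilinearMap_injective LinearMap.id injective_id := by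
  have hinf : infinityPt ∈ eqLocus f hf L hL := hframe (by simp)
  have h₀ : affinePt 0 ∈ eqLocus f hf L hL := hframe (by simp)
  have h₁ : affinePt 1 ∈ eqLocus f hf L hL := hframe (by simp)
  obtain ⟨a₁, ha₁⟩ := (mk_mem_eqLocus_iff _).mp hinf
  obtain ⟨a₂, ha₂⟩ := (mk_mem_eqLocus_iff _).mp h₀
  obtain ⟨a, ha⟩ := (mk_mem_eqLocus_iff _).mp h₁
  have hf_eq := LinearMap.eq_smul_comp_prodSemilinearMap hL ha₁.symm ha₂.symm ha.symm
  have ha0 : a ≠ 0 := by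
    rintro rfl
    have : f (1, 0) = f 0 := by rw [hf_eq, hf_eq 0, zero_smul, zero_smul]
    simpa using hf this
  ext x
  induction x using ind with | h v hv =>
  simp only [mk_mem_eqLocus_iff, hf_eq, LinearMap.id_apply]
  constructor
  · rintro ⟨b, hb⟩
    refine ⟨a⁻¹ * b, hL ?_⟩
    rw [mul_smul, map_smul, map_smul, hb, inv_smul_smul₀ ha0]
  · rintro ⟨b, hb⟩
    exact ⟨a * b, by rw [← hb, map_smul, mul_smul]⟩

end eqLocus

theorem exists_frame {x₁ x₂ x₃ : ℙ K (K × K)} (h₁₂ : x₁ ≠ x₂) (h₁₃ : x₁ ≠ x₃) (h₂₃ : x₂ ≠ x₃) :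
    ∃ (ψ : K × K →ₗ[K] K × K) (hψ : Injective ψ),
      map ψ hψ '' {infinityPt, affinePt 0, affinePt 1} = {x₁, x₂, x₃} := by
  have hli := linearIndependent_pair_iff_ne.mpr h₁₂
  have hspan : x₃.rep ∈ Submodule.span K {x₁.rep, x₂.rep} := by
    rw [← Matrix.range_cons_cons_empty, hli.span_eq_top_of_card_eq_finrank' (by simp)]
    trivial
  obtain ⟨α, β, hαβ⟩ := Submodule.mem_span_pair.mp hspan
  have hα : α ≠ 0 := by
    rintro rfl
    refine h₂₃.symm ?_
    rw [← x₂.mk_rep, ← x₃.mk_rep, mk_eq_mk_iff']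
    exact ⟨β, by simpa using hαβ⟩
  have hβ : β ≠ 0 := by
    rintro rfl
    refine h₁₃.symm ?_
    rw [← x₁.mk_rep, ← x₃.mk_rep, mk_eq_mk_iff']
    exact ⟨α, by simpa using hαβ⟩
  let ψ := (LinearMap.toSpanSingleton K _ (α • x₁.rep)).coprod
    (LinearMap.toSpanSingleton K _ (β • x₂.rep))
  have hψ : Injective ψ := by
    refine (injective_iff_map_eq_zero ψ).mpr fun ⟨x, y⟩ hxy => ?_
    have := LinearIndependent.pair_iff.mp hli (x * α) (y * β) (by simpa [ψ, mul_smul] using hxy)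
    simp_all
  have e₁ : map ψ hψ infinityPt = x₁ := by
    rw [infinityPt, map_mk, ← x₁.mk_rep, mk_eq_mk_iff']
    exact ⟨α, by simp [ψ]⟩
  have e₂ : map ψ hψ (affinePt 0) = x₂ := by
    rw [affinePt, map_mk, ← x₂.mk_rep, mk_eq_mk_iff']
    exact ⟨β, by simp [ψ]⟩
  have e₃ : map ψ hψ (affinePt 1) = x₃ := by
    rw [affinePt, map_mk, ← x₃.mk_rep, mk_eq_mk_iff']
    exact ⟨1, by simp [ψ, hαβ]⟩
  refine ⟨ψ, hψ, ?_⟩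
  simp only [Set.image_insert_eq, Set.image_singleton, e₁, e₂, e₃]

theorem ncard_eqLocus_inter_of_two_lt [Finite K] {W' : Type*} [AddCommGroup W'] [Module K W']
    {σ τ : K →+* K} {f : K × K →ₛₗ[σ] W} (hf : Injective f) {L : K × K →ₗ[K] W}
    (hL : Injective L) {g : K × K →ₛₗ[τ] W'} (hg : Injective g) {M : K × K →ₗ[K] W'}
    (hM : Injective M) (h : 2 < (eqLocus f hf L hL ∩ eqLocus g hg M hM).ncard) :
    (eqLocus f hf L hL ∩ eqLocus g hg M hM).ncard =
      (eqLocus σ.prodSemilinearMap σ.prodSemilinearMap_injective LinearMap.id injective_id ∩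
        eqLocus τ.prodSemilinearMap τ.prodSemilinearMap_injective LinearMap.id
          injective_id).ncard := by
  obtain ⟨x₁, h₁, x₂, h₂, x₃, h₃, h₁₂, h₁₃, h₂₃⟩ := (Set.two_lt_ncard).mp h
  obtain ⟨ψ, hψ, hframe⟩ := exists_frame h₁₂ h₁₃ h₂₃
  have hsub : {infinityPt, affinePt 0, affinePt 1} ⊆
      map ψ hψ ⁻¹' (eqLocus f hf L hL ∩ eqLocus g hg M hM) := by
    rw [← Set.image_subset_iff, hframe]
    exact Set.insert_subset h₁ (Set.insert_subset h₂ (Set.singleton_subset_iff.mpr h₃))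
  have hψ_bij : Bijective (map ψ hψ) := Finite.injective_iff_bijective.mp (map_injective _ _)
  rw [Set.preimage_inter, preimage_eqLocus, preimage_eqLocus] at hsub
  rw [← Set.ncard_preimage_of_injective_subset_range hψ_bij.1 (by simp [hψ_bij.2.range_eq]),
    Set.preimage_inter, preimage_eqLocus, preimage_eqLocus,
    eqLocus_eq_of_frame _ _ (hsub.trans Set.inter_subset_left),
    eqLocus_eq_of_frame _ _ (hsub.trans Set.inter_subset_right)]

theorem ncard_eqLocus_prodSemilinearMap_inter [Finite K] (σ τ : K →+* K) :
    (eqLocus σ.prodSemilinearMap σ.prodSemilinearMap_injective LinearMap.id injective_id ∩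
        eqLocus τ.prodSemilinearMap τ.prodSemilinearMap_injective LinearMap.id injective_id).ncard =
      {c | σ c = c ∧ τ c = c}.ncard + 1 := by
  have : eqLocus σ.prodSemilinearMap σ.prodSemilinearMap_injective LinearMap.id injective_id ∩
        eqLocus τ.prodSemilinearMap τ.prodSemilinearMap_injective LinearMap.id injective_id =
      insert infinityPt (affinePt '' {c | σ c = c ∧ τ c = c}) := by
    ext x
    rcases eq_infinityPt_or_exists_eq_affinePt x with rfl | ⟨c, rfl⟩
    · simp [eqLocus, map_prodSemilinearMap_infinityPt]
    · simp [eqLocus, map_prodSemilinearMap_affinePt, affinePt_injective.eq_iff,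
        affinePt_ne_infinityPt]
  rw [this, Set.ncard_insert_of_notMem (by simp [affinePt_ne_infinityPt]),
    Set.ncard_image_of_injective _ affinePt_injective]

end Projectivization

section FiniteField

variable {K : Type*} [Field K]

theorem ncard_setOf_pow_eq_one [Finite K] {d : ℕ} (hd : d ≠ 0) :
    {x : K | x ^ d = 1}.ncard = (Nat.card K - 1).gcd d := by
  have : {x : K | x ^ d = 1} = Units.val '' ((powMonoidHom d : Kˣ →* Kˣ).ker : Set Kˣ) := by
    ext x
    constructor
    · intro hx
      have hx0 : x ≠ 0 := by rintro rfl; simp [zero_pow hd] at hx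
      exact ⟨Units.mk0 x hx0, by ext; simpa using hx, rfl⟩
    · rintro ⟨u, hu, rfl⟩
      simpa using congrArg Units.val hu
  rw [this, Set.ncard_image_of_injective _ Units.val_injective, ← Nat.card_coe_set_eq,
    SetLike.coe_sort_coe, IsCyclic.card_powMonoidHom_ker, Nat.card_units]

theorem ncard_setOf_pow_pow_eq_self [Finite K] {p n : ℕ} (hK : Nat.card K = p ^ n) (k : ℕ) :
    {x : K | x ^ p ^ k = x}.ncard = p ^ n.gcd k := by
  rcases k.eq_zero_or_pos with rfl | hk
  · simp [← hK]
  have hp : 1 < p := by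
    by_contra! hp
    have := Finite.one_lt_card (α := K)
    rw [hK] at this
    exact this.not_ge (pow_le_one₀ (Nat.zero_le p) hp)
  have hpk : p ^ k - 1 ≠ 0 := Nat.sub_ne_zero_of_lt (Nat.one_lt_pow hk.ne' hp)
  have : {x : K | x ^ p ^ k = x} = insert 0 {x | x ^ (p ^ k - 1) = 1} := by
    ext x
    rcases eq_or_ne x 0 with rfl | hx
    · simp [zero_pow (by positivity : p ^ k ≠ 0)]
    · simp [hx, ← pow_sub_one_mul (by positivity : p ^ k ≠ 0) x]
  rw [this, Set.ncard_insert_of_notMem (by simp [zero_pow hpk]), ncard_setOf_pow_eq_one hpk, hK,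
    Nat.pow_sub_one_gcd_pow_sub_one, Nat.sub_add_cancel (Nat.one_le_pow _ _ (by omega))]

theorem setOf_iterateFrobenius_eq_and (p : ℕ) [ExpChar K p] (i s : ℕ) :
    {c : K | iterateFrobenius K p i c = c ∧ iterateFrobenius K p s c = c} =
      {c | c ^ p ^ i.gcd s = c} := by
  ext c
  simp only [Set.mem_ofPred_eq, coe_iterateFrobenius, ← iterate_frobenius (R := K) (p := p)]
  exact ⟨fun h => IsPeriodicPt.gcd h.1 h.2,
    fun h => ⟨IsPeriodicPt.trans_dvd h (Nat.gcd_dvd_left i s),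
      IsPeriodicPt.trans_dvd h (Nat.gcd_dvd_right i s)⟩⟩

end FiniteField

section Equation

variable {K : Type*} [Field K]

theorem ncard_solutions_le_two_of_pow_eq_pow {q r : ℕ} (hr : Injective fun u : K => u ^ r)
    {a b : K} (hab : (a, b) ≠ (0, 0)) (hdeg : a ^ (q + 1) = b ^ (q + 1)) :
    {u : K | b ^ q + a ^ q * u + a * u ^ r + b * u ^ (r + 1) = 0}.ncard ≤ 2 := by
  have hb : b ≠ 0 := by
    rintro rfl
    exact hab (by simpa using pow_eq_zero_iff (n := q + 1) (by omega) |>.mp (by simpa using hdeg))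
  have hroot : {u : K | u ^ r = -a ^ q / b}.Subsingleton := fun u hu v hv => hr (hu.trans hv.symm)
  have hsub : {u : K | b ^ q + a ^ q * u + a * u ^ r + b * u ^ (r + 1) = 0} ⊆
      {-a / b} ∪ {u | u ^ r = -a ^ q / b} := by
    intro u (hu : _ = 0)
    have : (b * u + a) * (b * u ^ r + a ^ q) = 0 := by linear_combination b * hu + hdeg
    rcases mul_eq_zero.mp this with h | h
    · left
      simp only [Set.mem_singleton_iff]
      field_simp
      linear_combination h
    · right
      simp only [Set.mem_ofPred_eq]
      field_simp
      linear_combination h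
  calc _ ≤ ({-a / b} ∪ {u | u ^ r = -a ^ q / b}).ncard :=
        Set.ncard_le_ncard hsub ((Set.finite_singleton _).union hroot.finite)
    _ ≤ 1 + 1 := (Set.ncard_union_le _ _).trans
        (add_le_add (Set.ncard_singleton _).le ((Set.ncard_le_one hroot.finite).mpr hroot))

open Projectivization

variable (p : ℕ) [ExpChar K p] (i s : ℕ) {a b : K}

theorem affinePt_preimage_eqLocus_mobius (hdet : -a ^ p ^ s * a - -b ^ p ^ s * b ≠ 0) :
    affinePt ⁻¹' eqLocus (iterateFrobenius K p i).prodSemilinearMap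
        (RingHom.prodSemilinearMap_injective _) (mobius (-a ^ p ^ s) (-b ^ p ^ s) b a)
        (mobius_injective hdet) =
      {u | b ^ p ^ s + a ^ p ^ s * u + a * u ^ p ^ i + b * u ^ (p ^ i + 1) = 0} := by
  ext u
  simp only [Set.mem_preimage, affinePt_mem_eqLocus_iff, RingHom.prodSemilinearMap_apply,
    iterateFrobenius_def, one_pow, mobius_apply, neg_mul, mul_one, Set.mem_ofPred_eq]
  constructor <;> intro h <;> linear_combination h

theorem affinePt_preimage_eqLocus_swap :
    affinePt ⁻¹' eqLocus (iterateFrobenius K p s).prodSemilinearMap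
        (RingHom.prodSemilinearMap_injective _) (mobius 0 1 1 0) (mobius_injective (by simp)) =
      {u | u ^ (p ^ s + 1) = 1} := by
  ext u
  simp [affinePt_mem_eqLocus_iff, iterateFrobenius_def, pow_succ]

theorem infinityPt_notMem_eqLocus_swap :
    infinityPt ∉ eqLocus (iterateFrobenius K p s).prodSemilinearMap
        (RingHom.prodSemilinearMap_injective _) (mobius 0 1 1 0) (mobius_injective (by simp)) := by
  simp [infinityPt_mem_eqLocus_iff]

theorem ncard_solutions_eq_ncard_eqLocus_inter (hdet : -a ^ p ^ s * a - -b ^ p ^ s * b ≠ 0) :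
    {u : K | u ^ (p ^ s + 1) = 1 ∧
        b ^ p ^ s + a ^ p ^ s * u + a * u ^ p ^ i + b * u ^ (p ^ i + 1) = 0}.ncard =
      (eqLocus (iterateFrobenius K p i).prodSemilinearMap (RingHom.prodSemilinearMap_injective _)
          (mobius (-a ^ p ^ s) (-b ^ p ^ s) b a) (mobius_injective hdet) ∩
        eqLocus (iterateFrobenius K p s).prodSemilinearMap (RingHom.prodSemilinearMap_injective _)
          (mobius 0 1 1 0) (mobius_injective (by simp))).ncard := by
  rw [← Set.ncard_preimage_of_injective_subset_range affinePt_injective, Set.preimage_inter,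
    affinePt_preimage_eqLocus_mobius p i s hdet, affinePt_preimage_eqLocus_swap, Set.inter_comm]
  · rfl
  rintro x ⟨-, hx⟩
  rcases eq_infinityPt_or_exists_eq_affinePt x with rfl | ⟨c, rfl⟩
  · exact absurd hx (infinityPt_notMem_eqLocus_swap p s)
  · exact ⟨c, rfl⟩

end Equation

theorem stmt4_general (p s : ℕ) (hp : p.Prime)
    (q : ℕ) (hq : q = p ^ s)
    (i m : ℕ) (hm : m = Nat.gcd i s)
    (K : Type) [Field K] [Fintype K] (hK : Fintype.card K = q ^ 2)
    (a b : K) (hab : (a, b) ≠ (0, 0)) :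
    ({u : K | u ^ (q + 1) = 1 ∧
        b ^ q + a ^ q * u + a * u ^ (p ^ i) + b * u ^ (p ^ i + 1) = 0}).ncard
      ∈ ({0, 1, 2, p ^ m + 1} : Set ℕ) := by
  subst hq hm
  have : Fact p.Prime := ⟨hp⟩
  have hK' : Fintype.card K = p ^ (2 * s) := by rw [hK, ← pow_mul, mul_comm]
  have : CharP K p := charP_of_card_eq_prime_pow hK'
  have hle : ∀ n ≤ 2, n ∈ ({0, 1, 2, p ^ i.gcd s + 1} : Set ℕ) := by
    intro n hn
    interval_cases n <;> simp
  by_cases hdeg : a ^ (p ^ s + 1) = b ^ (p ^ s + 1)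
  · exact hle _ <| (Set.ncard_le_ncard (fun u hu => hu.2) (Set.toFinite _)).trans
      (ncard_solutions_le_two_of_pow_eq_pow (iterateFrobenius K p i).injective hab hdeg)
  have hdet : -a ^ p ^ s * a - -b ^ p ^ s * b ≠ 0 := fun h => hdeg (by linear_combination -h)
  rw [ncard_solutions_eq_ncard_eqLocus_inter p i s hdet]
  rcases le_or_gt (_ : Set (ℙ K (K × K))).ncard 2 with h | h
  · exact hle _ h
  rw [ncard_eqLocus_inter_of_two_lt _ _ _ _ h, ncard_eqLocus_prodSemilinearMap_inter,
    setOf_iterateFrobenius_eq_and, ncard_setOf_pow_pow_eq_self (by simpa using hK'),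
    Nat.gcd_eq_right (dvd_mul_of_dvd_right (Nat.gcd_dvd_right i s) 2)]
  simp

theorem stmt4 (p s : ℕ) (hp : p.Prime) (hpodd : Odd p) (hs : 1 < s)
    (q : ℕ) (hq : q = p ^ s)
    (i m : ℕ) (hi0 : 0 < i) (his : i < s) (hm : m = Nat.gcd i s)
    (K : Type) [Field K] [Fintype K] (hK : Fintype.card K = q ^ 2)
    (a b : K) (hab : (a, b) ≠ (0, 0)) :
    ({u : K | u ^ (q + 1) = 1 ∧
        b ^ q + a ^ q * u + a * u ^ (p ^ i) + b * u ^ (p ^ i + 1) = 0}).ncard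
      ∈ ({0, 1, 2, p ^ m + 1} : Set ℕ) :=
  stmt4_general p s hp q hq i m hm K hK a b hab
end

section
/- Let q = 3^s with s ≥ 2 an integer, and let h = (q − 3)/2. Then the ternary subfield subcode T_h = {(c_0,…,c_q) ∈ F_3^{q+1} : ∑_{j=0}^q c_j β^{hj} = 0 and ∑_{j=0}^q c_j β^{(h+1)j} = 0} has F_3-dimension q + 1 − 4s (i.e., it contains exactly 3^{q+1−4s} codewords), and its minimum distance is at least 4. -/
/-!
Viewed over `𝔽₃`, the code is the kernel of the syndrome map `c ↦ (c(β^h), c(β^(h+1)))` into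
`K × K`, so it has at least `3^(q+1) / 3^(4s)` words. Since the coordinates lie in `𝔽₃`,
Frobenius shows that every codeword `c(X) = ∑ c_j X^j` also vanishes at `(β^(h+a))^(3^i)` for
`a < 2`, `i < 2s`. As `β^(h+2) = -1`, these points are `-β^(-(2-a)·3^i)`, and the exponents
`c·3^i` (`c ∈ {1, 2}`, `i < 2s`) are distinct modulo `3^s + 1`: the code has `4s` distinct
zeros. A polynomial of degree `< 4s` with `4s` roots vanishes, so a codeword is determined by its
last `q + 1 - 4s` coordinates, which gives the matching upper bound. Finally
`3(h+1) ≡ h-1 (mod q+1)`, so the zeros `β^(h-1), β^h, β^(h+1)` are consecutive and the BCH bound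
gives minimum distance at least `4`.
-/

open Polynomial

theorem Polynomial.eval_ofFn {R : Type*} [CommSemiring R] [DecidableEq R] {n : ℕ}
    (v : Fin n → R) (x : R) : (ofFn n v).eval x = ∑ j, v j * x ^ (j : ℕ) := by
  simp [ofFn_eq_sum_monomial, eval_finsetSum]

theorem Polynomial.eval_ofFn_pow_expChar_pow {R : Type*} [CommRing R] [DecidableEq R] {p : ℕ}
    [ExpChar R p] {n : ℕ} {c : Fin n → R} (hc : ∀ j, c j ^ p = c j) (x : R) (k : ℕ) :
    (ofFn n c).eval (x ^ p ^ k) = (ofFn n c).eval x ^ p ^ k := by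
  have hck : ∀ j, c j ^ p ^ k = c j := fun j => by
    induction k with
    | zero => simp
    | succ k ih => rw [pow_succ, pow_mul, ih, hc]
  simp only [eval_ofFn, sum_pow_char_pow, mul_pow, hck, pow_right_comm x]

theorem Polynomial.eq_zero_of_eval_ofFn_eq_zero {R : Type*} [CommRing R] [IsDomain R]
    [DecidableEq R] {ι : Type*} [Fintype ι] {γ : ι → R} (hγ : Function.Injective γ) {n : ℕ}
    {d : Fin n → R} (hd : ∀ j : Fin n, Fintype.card ι ≤ j → d j = 0)
    (h : ∀ i, (ofFn n d).eval (γ i) = 0) : d = 0 := by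
  suffices ofFn n d = 0 from injective_ofFn n (this.trans (map_zero _).symm)
  by_contra hP
  refine hP (eq_zero_of_natDegree_lt_card_of_eval_eq_zero _ hγ h ?_)
  rw [natDegree_lt_iff_degree_lt hP, degree_lt_iff_coeff_zero]
  intro k hk
  rcases lt_or_ge k n with hkn | hkn
  · rw [ofFn_coeff_eq_val_of_lt _ hkn]
    exact hd _ hk
  · exact ofFn_coeff_eq_zero_of_ge _ hkn

theorem ncard_setOf_eval_ofFn_eq_zero_le {F R : Type*} [Fintype F] [CommRing R] [IsDomain R]
    [DecidableEq R] {f : F → R} (hf : Function.Injective f) {ι : Type*} [Fintype ι] {γ : ι → R}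
    (hγ : Function.Injective γ) (n : ℕ) :
    {c : Fin n → F | ∀ i, (ofFn n fun j => f (c j)).eval (γ i) = 0}.ncard ≤
      Fintype.card F ^ (n - Fintype.card ι) := by
  set m := Fintype.card ι
  -- a word of the code is determined by its last `n - m` coordinates
  let restrict : (Fin n → F) → Fin (n - m) → F := fun c k => c ⟨m + k, by omega⟩
  have hinj : Set.InjOn restrict {c | ∀ i, (ofFn n fun j => f (c j)).eval (γ i) = 0} := by
    intro c hc c' hc' hcc
    have hd : (fun j => f (c j) - f (c' j)) = 0 := by
      refine eq_zero_of_eval_ofFn_eq_zero hγ (fun j hj => ?_) (fun i => ?_)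
      · have := congrFun hcc ⟨j - m, by omega⟩
        simp only [restrict, show m + (j - m : ℕ) = j by omega] at this
        rw [this, sub_self]
      · rw [show (fun j => f (c j) - f (c' j)) = (fun j => f (c j)) - fun j => f (c' j) from rfl,
          map_sub, eval_sub, hc i, hc' i, sub_zero]
    exact funext fun j => hf (sub_eq_zero.1 (congrFun hd j))
  calc _ ≤ (Set.univ : Set (Fin (n - m) → F)).ncard :=
        Set.ncard_le_ncard_of_injOn restrict (fun _ _ => Set.mem_univ _) hinj Set.finite_univ
    _ = Fintype.card F ^ (n - m) := by
        rw [Set.ncard_univ, Nat.card_eq_fintype_card, Fintype.card_fun, Fintype.card_fin]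

theorem eq_zero_of_forall_sum_mul_pow_eq_zero {R : Type*} [CommRing R] [IsDomain R] {ι : Type*}
    [Fintype ι] {x e : ι → R} (hx : Function.Injective x)
    (h : ∀ t < Fintype.card ι, ∑ j, e j * x j ^ t = 0) : e = 0 := by
  let σ := (Fintype.equivFin ι).symm
  have := Matrix.eq_zero_of_forall_pow_sum_mul_pow_eq_zero (f := x ∘ σ) (v := e ∘ σ)
    (hx.comp σ.injective) fun t => by
      simpa [σ.sum_comp (fun j => e j * x j ^ (t : ℕ))] using h t t.isLt
  ext j
  simpa using congrFun this (σ.symm j)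

theorem lt_hammingNorm_of_eval_ofFn_eq_zero {K : Type*} [Field K] [DecidableEq K] {n : ℕ}
    {β : K} (hβ : IsPrimitiveRoot β n) {c : Fin n → K} (hc : c ≠ 0) {k δ : ℕ}
    (h : ∀ t < δ, (ofFn n c).eval (β ^ (k + t)) = 0) : δ < hammingNorm c := by
  by_contra! hle
  let S := {j : Fin n // c j ≠ 0}
  have hS : Fintype.card S = hammingNorm c := Fintype.card_subtype _
  have hx : Function.Injective fun j : S => β ^ (j.1 : ℕ) := fun j j' hjj =>
    Subtype.ext (Fin.ext (hβ.pow_inj j.1.isLt j'.1.isLt hjj))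
  have hsum : ∀ t, ∑ j : S, c j * (β ^ (j.1 : ℕ)) ^ k * (β ^ (j.1 : ℕ)) ^ t =
      (ofFn n c).eval (β ^ (k + t)) := fun t => by
    rw [eval_ofFn, ← Finset.sum_subtype {j | c j ≠ 0} (by simp)
      (fun j => c j * (β ^ (j : ℕ)) ^ k * (β ^ (j : ℕ)) ^ t),
      Finset.sum_filter_of_ne fun j _ hj => left_ne_zero_of_mul (left_ne_zero_of_mul hj)]
    exact Finset.sum_congr rfl fun j _ => by ring
  have he := eq_zero_of_forall_sum_mul_pow_eq_zero (e := fun j : S => c j * (β ^ (j.1 : ℕ)) ^ k) hx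
    fun t ht => (hsum t).trans (h t (by omega))
  refine hc (funext fun j => by_contra fun hj => ?_)
  have := congrFun he ⟨j, hj⟩
  exact hj ((mul_eq_zero.1 this).resolve_right
    (pow_ne_zero _ (pow_ne_zero _ (hβ.ne_zero j.pos.ne'))))

theorem AddMonoidHom.card_le_card_ker_mul {A B : Type*} [AddGroup A] [AddGroup B] [Finite B]
    (f : A →+ B) : Nat.card A ≤ Nat.card f.ker * Nat.card B := by
  rw [← f.ker.card_mul_index, AddSubgroup.index_ker]
  exact Nat.mul_le_mul_left _ (AddSubgroup.card_le_card_addGroup _)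

theorem ncard_setOf_pow_char_eq_self_and {K : Type*} [Field K] (p : ℕ) [Fact p.Prime]
    [CharP K p] {ι : Type*} (P : (ι → K) → Prop) :
    {c : ι → K | (∀ j, c j ^ p = c j) ∧ P c}.ncard =
      {c : ι → ZMod p | P fun j => ZMod.castHom dvd_rfl K (c j)}.ncard := by
  set φ := ZMod.castHom (dvd_refl p) K
  rw [← Set.ncard_image_of_injective _ φ.injective.comp_left]
  congr 1
  ext c
  constructor
  · rintro ⟨hc, hP⟩
    have hrange : ∀ j, ∃ a, φ a = c j := fun j => by
      rw [← RingHom.mem_fieldRange, ZMod.fieldRange_castHom_eq_bot,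
        Subfield.mem_bot_iff_pow_eq_self]
      exact hc j
    choose a ha using hrange
    exact ⟨a, by simpa [ha] using hP, funext ha⟩
  · rintro ⟨a, ha, rfl⟩
    exact ⟨fun j => by simp [← map_pow, ZMod.pow_card], ha⟩

noncomputable def syndrome {F K ι : Type*} [Semiring F] [CommSemiring K] [DecidableEq K]
    (f : F →+* K) (x : ι → K) (n : ℕ) : (Fin n → F) →+ (ι → K) where
  toFun c i := (ofFn n fun j => f (c j)).eval (x i)
  map_zero' := by ext; simp [← Pi.zero_def]
  map_add' a b := by
    ext i
    simp only [Pi.add_apply, map_add]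
    rw [show (fun j => f (a j) + f (b j)) = (fun j => f (a j)) + fun j => f (b j) from rfl,
      map_add, eval_add]

theorem coe_ker_syndrome {F K ι : Type*} [Ring F] [CommSemiring K] [DecidableEq K] (f : F →+* K)
    (x : ι → K) (n : ℕ) :
    ((syndrome f x n).ker : Set (Fin n → F)) =
      {c | ∀ i, (ofFn n fun j => f (c j)).eval (x i) = 0} := by
  ext c
  simp [syndrome, funext_iff]

theorem four_mul_le_three_pow {s : ℕ} (hs : 2 ≤ s) : 4 * s ≤ 3 ^ s := by
  induction s, hs using Nat.le_induction with
  | base => norm_num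
  | succ m hm ih => rw [pow_succ]; omega

theorem eq_of_modEq_mul_three_pow {s c c' d : ℕ} (hs : 2 ≤ s) (hc : c = 1 ∨ c = 2)
    (hc' : c' = 1 ∨ c' = 2) (hd : d < 2 * s) (h : c ≡ c' * 3 ^ d [MOD 3 ^ s + 1]) :
    c = c' ∧ d = 0 := by
  have h3s : 3 ^ s = 3 * 3 ^ (s - 1) := by rw [← pow_succ']; congr 1; omega
  have h3 : 3 ≤ 3 ^ (s - 1) := Nat.le_self_pow (by omega) 3
  rcases lt_or_ge d s with hds | hds
  · have hle : 3 ^ d ≤ 3 ^ (s - 1) := Nat.pow_le_pow_right (by norm_num) (by omega)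
    have heq : c = c' * 3 ^ d :=
      h.eq_of_lt_of_lt (by omega) (by rcases hc' with rfl | rfl <;> omega)
    obtain rfl | hd0 := Nat.eq_zero_or_pos d
    · simpa using heq
    · have : 3 ∣ c := heq ▸ (dvd_pow_self 3 hd0.ne').mul_left c'
      omega
  · obtain ⟨r, rfl⟩ := Nat.exists_eq_add_of_le hds
    have hle : 3 ^ r ≤ 3 ^ (s - 1) := Nat.pow_le_pow_right (by norm_num) (by omega)
    -- `3 ^ s ≡ -1`, so the congruence says `3 ^ s + 1 ∣ c + c' * 3 ^ r`, which is too small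
    have hdvd : 3 ^ s + 1 ∣ c + c' * 3 ^ r := by
      refine Nat.modEq_zero_iff_dvd.1 ((h.add_right (c' * 3 ^ r)).trans ?_)
      rw [show c' * 3 ^ (s + r) + c' * 3 ^ r = (3 ^ s + 1) * (c' * 3 ^ r) by ring]
      exact Nat.modEq_zero_iff_dvd.2 (dvd_mul_right _ _)
    have := Nat.le_of_dvd (by omega) hdvd
    rcases hc' with rfl | rfl <;> omega

theorem eq_of_mul_three_pow_modEq {s c c' i i' : ℕ} (hs : 2 ≤ s) (hc : c = 1 ∨ c = 2)
    (hc' : c' = 1 ∨ c' = 2) (hi : i < 2 * s) (hi' : i' < 2 * s)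
    (h : c * 3 ^ i ≡ c' * 3 ^ i' [MOD 3 ^ s + 1]) : c = c' ∧ i = i' := by
  wlog hii : i ≤ i' generalizing c c' i i'
  · obtain ⟨h₁, h₂⟩ := this hc' hc hi' hi h.symm (by omega)
    exact ⟨h₁.symm, h₂.symm⟩
  obtain ⟨d, rfl⟩ := Nat.exists_eq_add_of_le hii
  have hcop : Nat.Coprime (3 ^ s + 1) (3 ^ i) :=
    ((Nat.coprime_self_add_right.2 (Nat.coprime_one_right _)).coprime_dvd_left
      (dvd_pow_self 3 (by omega))).pow_left i |>.symm
  have hcd : c ≡ c' * 3 ^ d [MOD 3 ^ s + 1] :=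
    Nat.ModEq.cancel_left_of_coprime hcop (by convert h using 1 <;> ring)
  obtain ⟨hcc, hd⟩ := eq_of_modEq_mul_three_pow hs hc hc' (by omega) hcd
  exact ⟨hcc, by omega⟩

theorem injective_pow_pow_three_pow {K : Type*} [Field K] {s q h : ℕ} (hs : 2 ≤ s)
    (hq : q = 3 ^ s) (hh : 2 * h = q - 3) {β : K} (hβ : IsPrimitiveRoot β (q + 1)) :
    Function.Injective fun p : Fin 2 × Fin (2 * s) => (β ^ (h + (p.1 : ℕ))) ^ 3 ^ (p.2 : ℕ) := by
  have hq9 : 9 ≤ q := hq ▸ (Nat.pow_le_pow_right (by norm_num) hs : 3 ^ 2 ≤ 3 ^ s)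
  have hneg : β ^ (h + 2) = -1 := by
    have hN : q + 1 = (h + 2) * 2 := by omega
    rw [hN] at hβ
    have := hβ.pow_of_dvd (by omega) (dvd_mul_right (h + 2) 2)
    rw [Nat.mul_div_cancel_left _ (by omega)] at this
    exact this.eq_neg_one_of_two_right
  have key : ∀ p : Fin 2 × Fin (2 * s),
      (β ^ (h + (p.1 : ℕ))) ^ 3 ^ (p.2 : ℕ) * β ^ ((2 - (p.1 : ℕ)) * 3 ^ (p.2 : ℕ)) = -1 := by
    intro p
    rw [pow_mul, ← mul_pow, ← pow_add, show h + (p.1 : ℕ) + (2 - (p.1 : ℕ)) = h + 2 by omega, hneg,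
      Odd.neg_one_pow (Odd.pow (by decide))]
  intro p p' hpp
  have hpow : β ^ ((2 - (p.1 : ℕ)) * 3 ^ (p.2 : ℕ)) = β ^ ((2 - (p'.1 : ℕ)) * 3 ^ (p'.2 : ℕ)) := by
    have := (key p).trans (key p').symm
    rw [show (β ^ (h + (p.1 : ℕ))) ^ 3 ^ (p.2 : ℕ) = (β ^ (h + (p'.1 : ℕ))) ^ 3 ^ (p'.2 : ℕ)
      from hpp] at this
    exact mul_left_cancel₀ (pow_ne_zero _ (pow_ne_zero _ (hβ.ne_zero (by omega)))) this
  rw [(hβ.isOfFinOrder (by omega)).pow_eq_pow_iff_modEq, ← hβ.eq_orderOf, hq] at hpow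
  obtain ⟨h₁, h₂⟩ := eq_of_mul_three_pow_modEq hs (by omega) (by omega) p.2.isLt p'.2.isLt hpow
  exact Prod.ext (Fin.ext (by omega)) (Fin.ext h₂)

theorem ncard_ternarySubfieldSubcode {s q h : ℕ} (hs : 2 ≤ s) (hq : q = 3 ^ s) (hh : 2 * h = q - 3)
    {K : Type*} [Field K] [Fintype K] [DecidableEq K] [CharP K 3] (hK : Fintype.card K = q ^ 2)
    {β : K} (hβ : IsPrimitiveRoot β (q + 1)) :
    {c : Fin (q + 1) → ZMod 3 | ∀ a : Fin 2,
      (ofFn (q + 1) fun j => ZMod.castHom dvd_rfl K (c j)).eval (β ^ (h + (a : ℕ))) = 0}.ncard =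
      3 ^ (q + 1 - 4 * s) := by
  set ι := ZMod.castHom (dvd_refl 3) K
  set x : Fin 2 → K := fun a => β ^ (h + (a : ℕ))
  have h4s : 4 * s ≤ q + 1 := by have := four_mul_le_three_pow hs; omega
  apply le_antisymm
  · calc _ ≤ {c : Fin (q + 1) → ZMod 3 | ∀ p : Fin 2 × Fin (2 * s),
          (ofFn (q + 1) fun j => ι (c j)).eval (x p.1 ^ 3 ^ (p.2 : ℕ)) = 0}.ncard := by
          refine Set.ncard_le_ncard (fun c hc p => ?_) (Set.toFinite _)
          rw [eval_ofFn_pow_expChar_pow (fun j => by rw [← map_pow, ZMod.pow_card]), hc p.1,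
            zero_pow (by positivity)]
      _ ≤ 3 ^ (q + 1 - Fintype.card (Fin 2 × Fin (2 * s))) :=
          ncard_setOf_eval_ofFn_eq_zero_le ι.injective (injective_pow_pow_three_pow hs hq hh hβ) _
      _ = 3 ^ (q + 1 - 4 * s) := by simp only [Fintype.card_prod, Fintype.card_fin]; ring_nf
  · have hcard := (syndrome ι x (q + 1)).card_le_card_ker_mul
    have hK4 : Nat.card (Fin 2 → K) = 3 ^ (4 * s) := by
      rw [Nat.card_fun, Nat.card_eq_fintype_card, hK, hq, Nat.card_fin, ← pow_mul, ← pow_mul]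
      ring_nf
    rw [Nat.card_fun, Nat.card_zmod, Nat.card_fin, hK4, ← SetLike.coe_sort_coe,
      Nat.card_coe_set_eq, coe_ker_syndrome] at hcard
    refine Nat.le_of_mul_le_mul_right ?_ (by positivity : 0 < 3 ^ (4 * s))
    rwa [← pow_add, Nat.sub_add_cancel h4s]

theorem four_le_hammingNorm_of_eval_eq_zero {K : Type*} [Field K] [DecidableEq K] [CharP K 3]
    {q h : ℕ} (hq : 5 ≤ q) (hh : 2 * h = q - 3) {β : K} (hβ : IsPrimitiveRoot β (q + 1))
    {c : Fin (q + 1) → K} (hc3 : ∀ j, c j ^ 3 = c j)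
    (hc : ∀ a : Fin 2, (ofFn (q + 1) c).eval (β ^ (h + (a : ℕ))) = 0) (hc0 : c ≠ 0) :
    4 ≤ hammingNorm c := by
  have hz₁ : (ofFn (q + 1) c).eval (β ^ h) = 0 := by simpa using hc 0
  have hz₂ : (ofFn (q + 1) c).eval (β ^ (h + 1)) = 0 := by simpa using hc 1
  -- Frobenius moves the zero `β ^ (h + 1)` to `β ^ (3 * h + 3) = β ^ (h - 1)`
  have hz₀ : (ofFn (q + 1) c).eval (β ^ (h - 1)) = 0 := by
    have : β ^ (h - 1) = (β ^ (h + 1)) ^ 3 ^ 1 := by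
      rw [← pow_mul, show (h + 1) * 3 ^ 1 = (h - 1) + (q + 1) by omega, pow_add,
        hβ.pow_eq_one, mul_one]
    rw [this, eval_ofFn_pow_expChar_pow hc3, hz₂, zero_pow (by positivity)]
  have hzero : ∀ t < 3, (ofFn (q + 1) c).eval (β ^ (h - 1 + t)) = 0 := by
    intro t ht
    interval_cases t
    · exact hz₀
    · rwa [show h - 1 + 1 = h by omega]
    · rwa [show h - 1 + 2 = h + 1 by omega]
  exact lt_hammingNorm_of_eval_ofFn_eq_zero hβ hc0 hzero

theorem stmt18 (s : ℕ) (hs : 2 ≤ s) (q : ℕ) (hq : q = 3 ^ s)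
    (h : ℕ) (hh : 2 * h = q - 3)
    (K : Type) [Field K] [Fintype K] [DecidableEq K] (hK : Fintype.card K = q ^ 2)
    (β : K) (hβ : IsPrimitiveRoot β (q + 1))
    (T : Set (Fin (q + 1) → K))
    (hT : T = {c | (∀ j, (c j) ^ 3 = c j) ∧
      (∑ j : Fin (q + 1), c j * β ^ (h * (j : ℕ)) = 0) ∧
      (∑ j : Fin (q + 1), c j * β ^ ((h + 1) * (j : ℕ)) = 0)}) :
    T.ncard = 3 ^ (q + 1 - 4 * s) ∧
    ∀ c ∈ T, c ≠ 0 → 4 ≤ hammingNorm c := by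
  have : CharP K 3 := charP_of_card_eq_prime_pow (f := 2 * s) (by rw [hK, hq, ← pow_mul, mul_comm])
  have hq9 : 9 ≤ q := hq ▸ (Nat.pow_le_pow_right (by norm_num) hs : 3 ^ 2 ≤ 3 ^ s)
  have hT' : T = {c | (∀ j, c j ^ 3 = c j) ∧
      ∀ a : Fin 2, (ofFn (q + 1) c).eval (β ^ (h + (a : ℕ))) = 0} := by
    simp [hT, Fin.forall_fin_two, eval_ofFn, pow_mul]
  refine ⟨?_, fun c hc hc0 => ?_⟩
  · rw [hT', ncard_setOf_pow_char_eq_self_and]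
    exact ncard_ternarySubfieldSubcode hs hq hh hK hβ
  · rw [hT'] at hc
    exact four_le_hammingNorm_of_eval_eq_zero (by omega) hh hβ hc.1 hc.2 hc0
end

section
/- Let s ≥ 4 be an integer. Then the least positive integer ℓ such that 2^s + 1 divides 3·(2^ℓ − 1) (equivalently, such that 3·2^ℓ ≡ 3 (mod 2^s + 1)) is ℓ = 2s. In other words, the 2-cyclotomic coset of 3 modulo 2^s + 1 has size 2s. -/
/-!
Write `n = 2 ^ s + 1`. Since `2 ^ s ≡ -1 (mod n)`, the condition `n ∣ 3 * (2 ^ (s + k) - 1)` is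
equivalent to `n ∣ 3 * (2 ^ k + 1)`; for `k = s` this holds, so `ℓ = 2 * s` works. For a smaller
`ℓ`, reducing in this way leaves a positive multiple `3 * (2 ^ j ∓ 1)` of `n` with `j < s`, which is
below `2 * n` and hence equal to `n`; comparing both sides modulo `8` (resp. `4`) rules this out
once `s ≥ 4` (for `s = 3` indeed `3 * (2 ^ 2 - 1) = 3 * (2 ^ 1 + 1) = 2 ^ 3 + 1`).
-/

namespace CyclotomicCosetOfThree

theorem dvd_mul_two_pow_add_sub_one_iff (c s k : ℕ) :
    2 ^ s + 1 ∣ c * (2 ^ (s + k) - 1) ↔ 2 ^ s + 1 ∣ c * (2 ^ k + 1) := by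
  have hsum : c * (2 ^ (s + k) - 1) + c * (2 ^ k + 1) = (2 ^ s + 1) * (c * 2 ^ k) := by
    have : 1 ≤ 2 ^ (s + k) := Nat.one_le_two_pow
    zify [this]
    ring
  have hdvd : 2 ^ s + 1 ∣ c * (2 ^ (s + k) - 1) + c * (2 ^ k + 1) := hsum ▸ Dvd.intro _ rfl
  exact ⟨fun h => (Nat.dvd_add_right h).mp hdvd, fun h => (Nat.dvd_add_left h).mp hdvd⟩

theorem three_mul_two_pow_add_one_lt {j s : ℕ} (hs : 2 ≤ s) (hj : j < s) :
    3 * (2 ^ j + 1) < 2 * (2 ^ s + 1) := by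
  have hpow : 2 ^ (j + 1) ≤ 2 ^ s := Nat.pow_le_pow_right two_pos hj
  have : 2 ^ 2 ≤ 2 ^ s := Nat.pow_le_pow_right two_pos hs
  rw [pow_succ] at hpow
  omega

theorem eq_of_dvd_three_mul_two_pow_add_one {j s m : ℕ} (hs : 2 ≤ s) (hj : j < s) (hm : m ≤ 3 * (2 ^ j + 1))
    (hm0 : m ≠ 0) (hdvd : 2 ^ s + 1 ∣ m) : m = 2 ^ s + 1 :=
  Nat.eq_of_dvd_of_lt_two_mul hm0 hdvd (hm.trans_lt (three_mul_two_pow_add_one_lt hs hj))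

theorem three_mul_two_pow_sub_one_ne {s : ℕ} (hs : 4 ≤ s) (j : ℕ) :
    3 * (2 ^ j - 1) ≠ 2 ^ s + 1 := by
  have h16 : 2 ^ 4 ∣ 2 ^ s := Nat.pow_dvd_pow 2 hs
  have hs16 : 2 ^ 4 ≤ 2 ^ s := Nat.pow_le_pow_right two_pos hs
  rcases lt_or_ge j 3 with hj | hj
  · have : 2 ^ j ≤ 2 ^ 2 := Nat.pow_le_pow_right two_pos (by omega)
    omega
  · have : 2 ^ 3 ∣ 2 ^ j := Nat.pow_dvd_pow 2 hj
    omega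

theorem three_mul_two_pow_add_one_ne {s : ℕ} (hs : 4 ≤ s) (j : ℕ) :
    3 * (2 ^ j + 1) ≠ 2 ^ s + 1 := by
  have h16 : 2 ^ 4 ∣ 2 ^ s := Nat.pow_dvd_pow 2 hs
  have hs16 : 2 ^ 4 ≤ 2 ^ s := Nat.pow_le_pow_right two_pos hs
  rcases lt_or_ge j 2 with hj | hj
  · have : 2 ^ j ≤ 2 ^ 1 := Nat.pow_le_pow_right two_pos (by omega)
    omega
  · have : 2 ^ 2 ∣ 2 ^ j := Nat.pow_dvd_pow 2 hj
    omega

end CyclotomicCosetOfThree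

open CyclotomicCosetOfThree in
theorem stmt19 (s : ℕ) (hs : 4 ≤ s) :
    IsLeast {ℓ : ℕ | 0 < ℓ ∧ (2 ^ s + 1) ∣ 3 * (2 ^ ℓ - 1)} (2 * s) := by
  refine ⟨⟨by omega, ?_⟩, ?_⟩
  · rw [two_mul, dvd_mul_two_pow_add_sub_one_iff]
    exact Dvd.intro_left _ rfl
  rintro ℓ ⟨hℓ, hdvd⟩
  by_contra! hlt
  rcases lt_or_ge ℓ s with hℓs | hsℓ
  · have hpos : 3 * (2 ^ ℓ - 1) ≠ 0 := by
      have : 2 ^ 1 ≤ 2 ^ ℓ := Nat.pow_le_pow_right two_pos hℓ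
      omega
    exact three_mul_two_pow_sub_one_ne hs ℓ <|
      eq_of_dvd_three_mul_two_pow_add_one (by omega) hℓs (by omega) hpos hdvd
  · obtain ⟨k, rfl⟩ := Nat.exists_eq_add_of_le hsℓ
    rw [dvd_mul_two_pow_add_sub_one_iff] at hdvd
    exact three_mul_two_pow_add_one_ne hs k <|
      eq_of_dvd_three_mul_two_pow_add_one (by omega) (by omega) le_rfl (by positivity) hdvd
end
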